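/- Let W be a second-order working set selection. Then for every α ∈ R \ R* one has v_{W(α)}ᵀ∇f(α) ≠ 0. In particular, if moreover v_{W(α)} lies in the kernel of K (i.e., K v_{W(α)} = 0), then g̃_W(α) = ∞. -/

import Mathlib

open Matrix Filter Topology ENNReal

namespace SMO

noncomputable section

variable {l : ℕ}

/-- The dual SVM objective `f(α) = yᵀα − (1/2) αᵀKα`. -/
def obj (y : Fin l → ℝ) (K : Matrix (Fin l) (Fin l) ℝ) (α : Fin l → ℝ) : ℝ :=
  y ⬝ᵥ α - (1 / 2) * (α ⬝ᵥ (K *ᵥ α))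

/-- The gradient `∇f(α) = y − Kα`. -/
def grad (y : Fin l → ℝ) (K : Matrix (Fin l) (Fin l) ℝ) (α : Fin l → ℝ) : Fin l → ℝ :=
  y - K *ᵥ α

/-- The direction `v_B = e_i − e_j` of a working set `B = (i, j)`. -/
def dir (B : Fin l × Fin l) : Fin l → ℝ :=
  Pi.single B.1 1 - Pi.single B.2 1

/-- Lower bound `L_i = min {0, y_i C}`. -/
def lb (y : Fin l → ℝ) (C : ℝ) (i : Fin l) : ℝ := min 0 (y i * C)

/-- Upper bound `U_i = max {0, y_i C}`. -/
def ub (y : Fin l → ℝ) (C : ℝ) (i : Fin l) : ℝ := max 0 (y i * C)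

/-- The feasible region `R`. -/
def feas (y : Fin l → ℝ) (C : ℝ) : Set (Fin l → ℝ) :=
  {α | (∑ i, α i) = 0 ∧ ∀ i, lb y C i ≤ α i ∧ α i ≤ ub y C i}

/-- `I_up(α) = {i : α_i < U_i}`. -/
def Iup (y : Fin l → ℝ) (C : ℝ) (α : Fin l → ℝ) : Set (Fin l) := {i | α i < ub y C i}

/-- `I_down(α) = {i : α_i > L_i}`. -/
def Idown (y : Fin l → ℝ) (C : ℝ) (α : Fin l → ℝ) : Set (Fin l) := {i | lb y C i < α i}

/-- The set `B(α)` of working sets feasible at `α`. -/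
def wsets (y : Fin l → ℝ) (C : ℝ) (α : Fin l → ℝ) : Set (Fin l × Fin l) :=
  {B | B.1 ∈ Iup y C α ∧ B.2 ∈ Idown y C α ∧ B.1 ≠ B.2}

/-- The optimal value `f* = max {f(α) : α ∈ R}`. -/
def fstar (y : Fin l → ℝ) (K : Matrix (Fin l) (Fin l) ℝ) (C : ℝ) : ℝ :=
  sSup (obj y K '' feas y C)

/-- The optimal set `R* = {α ∈ R : f(α) = f*}`. -/
def opt (y : Fin l → ℝ) (K : Matrix (Fin l) (Fin l) ℝ) (C : ℝ) : Set (Fin l → ℝ) :=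
  {α ∈ feas y C | obj y K α = fstar y K C}

/-- The gap function `ψ(α) = max {v_Bᵀ ∇f(α) : B ∈ B(α)}`. -/
def psi (y : Fin l → ℝ) (K : Matrix (Fin l) (Fin l) ℝ) (C : ℝ) (α : Fin l → ℝ) : ℝ :=
  sSup ((fun B => dir B ⬝ᵥ grad y K α) '' wsets y C α)

/-- The Newton-step gain `g̃_B(α) = (v_Bᵀ∇f(α))² / (2 v_BᵀKv_B) ∈ [0, ∞]`, with the
conventions `g̃_B(α) = 0` if `v_BᵀKv_B = 0` and `v_Bᵀ∇f(α) = 0`, and `g̃_B(α) = ∞` if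
`v_BᵀKv_B = 0` and `v_Bᵀ∇f(α) ≠ 0`. -/
def ngain (y : Fin l → ℝ) (K : Matrix (Fin l) (Fin l) ℝ) (B : Fin l × Fin l)
    (α : Fin l → ℝ) : ℝ≥0∞ :=
  if dir B ⬝ᵥ (K *ᵥ dir B) = 0 then
    (if dir B ⬝ᵥ grad y K α = 0 then 0 else ⊤)
  else ENNReal.ofReal ((dir B ⬝ᵥ grad y K α) ^ 2 / (2 * (dir B ⬝ᵥ (K *ᵥ dir B))))

/-- A second-order working set selection: on every non-optimal feasible `α` it returns a
working set `W(α) = (i, j) ∈ B(α)` such that `i` maximizes `(∇f(α))_n` over `n ∈ I_up(α)`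
and `j` maximizes `g̃_{(i,n)}(α)` over `n ∈ I_down(α) \ {i}`. -/
def IsSecondOrderWSS (y : Fin l → ℝ) (K : Matrix (Fin l) (Fin l) ℝ) (C : ℝ)
    (W : (Fin l → ℝ) → Fin l × Fin l) : Prop :=
  ∀ α ∈ feas y C \ opt y K C,
    W α ∈ wsets y C α ∧
    (∀ n ∈ Iup y C α, grad y K α n ≤ grad y K α (W α).1) ∧
    (∀ n ∈ Idown y C α, n ≠ (W α).1 → ngain y K ((W α).1, n) α ≤ ngain y K (W α) α)

/-! Because `f` is concave and `R` is cut out by one linear equation and box constraints, a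
feasible `α` is optimal as soon as `(∇f(α))_p ≤ (∇f(α))_q` for all `p ∈ I_up(α)`, `q ∈ I_down(α)`.
At a non-optimal `α` some `q ∈ I_down(α)` therefore has `(∇f(α))_q` strictly below the maximum
`(∇f(α))_i` over `I_up(α)`, so the pair `(i, q)` has positive gain. The second index of `W(α)`
maximizes the gain, so `g̃_W(α) > 0`, which is impossible when `v_{W(α)}ᵀ∇f(α) = 0`. -/

lemma dir_dotProduct (B : Fin l × Fin l) (v : Fin l → ℝ) : dir B ⬝ᵥ v = v B.1 - v B.2 := by
  simp [dir, sub_dotProduct, single_dotProduct]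

lemma obj_add {y : Fin l → ℝ} {K : Matrix (Fin l) (Fin l) ℝ} (hK : K.IsSymm)
    (α d : Fin l → ℝ) :
    obj y K (α + d) = obj y K α + grad y K α ⬝ᵥ d - 1 / 2 * (d ⬝ᵥ (K *ᵥ d)) := by
  have hcross : α ⬝ᵥ (K *ᵥ d) = d ⬝ᵥ (K *ᵥ α) := by
    rw [← dotProduct_transpose_mulVec, hK.eq]
  simp only [obj, grad, mulVec_add, dotProduct_add, add_dotProduct, sub_dotProduct, hcross,
    dotProduct_comm (K *ᵥ α) d]
  ring

lemma obj_le_add_grad_dotProduct {y : Fin l → ℝ} {K : Matrix (Fin l) (Fin l) ℝ}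
    (hK : K.PosSemidef) (α β : Fin l → ℝ) :
    obj y K β ≤ obj y K α + grad y K α ⬝ᵥ (β - α) := by
  have hsymm : K.IsSymm := by simpa using hK.1
  have hquad := hK.dotProduct_mulVec_nonneg (β - α)
  rw [star_trivial] at hquad
  have h := obj_add (y := y) hsymm α (β - α)
  rw [add_sub_cancel] at h
  linarith

lemma dotProduct_nonpos_of_sum_eq_zero {ι : Type*} [Fintype ι] {g d : ι → ℝ}
    (hd : ∑ i, d i = 0) (hg : ∀ p q, 0 < d p → d q < 0 → g p ≤ g q) : g ⬝ᵥ d ≤ 0 := by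
  classical
  rcases (Finset.univ.filter fun i => 0 < d i).eq_empty_or_nonempty with hP | hP
  · have hd_nonpos : ∀ i ∈ Finset.univ, d i ≤ 0 := fun i _ => by
      simpa using Finset.filter_eq_empty_iff.1 hP (Finset.mem_univ i)
    have hd_zero : d = 0 := funext fun i =>
      (Finset.sum_eq_zero_iff_of_nonpos hd_nonpos).1 hd i (Finset.mem_univ i)
    simp [hd_zero]
  · set b := (Finset.univ.filter fun i => 0 < d i).sup' hP g
    -- `b` separates the values of `g` on `{d > 0}` from those on `{d < 0}`.
    have hterm : ∀ i, g i * d i ≤ b * d i := fun i => by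
      rcases lt_trichotomy (d i) 0 with hneg | hzero | hpos
      · have : b ≤ g i := Finset.sup'_le _ _ fun p hp => hg p i (by simpa using hp) hneg
        nlinarith
      · simp [hzero]
      · have : g i ≤ b := Finset.le_sup' g (by simpa using hpos)
        nlinarith
    calc g ⬝ᵥ d = ∑ i, g i * d i := rfl
      _ ≤ ∑ i, b * d i := Finset.sum_le_sum fun i _ => hterm i
      _ = 0 := by rw [← Finset.mul_sum, hd, mul_zero]

lemma mem_opt_of_grad_le {y : Fin l → ℝ} {K : Matrix (Fin l) (Fin l) ℝ} {C : ℝ}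
    (hK : K.PosSemidef) {α : Fin l → ℝ} (hα : α ∈ feas y C)
    (hkkt : ∀ p ∈ Iup y C α, ∀ q ∈ Idown y C α, grad y K α p ≤ grad y K α q) :
    α ∈ opt y K C := by
  suffices hmax : IsGreatest (obj y K '' feas y C) (obj y K α) from ⟨hα, hmax.csSup_eq.symm⟩
  refine ⟨⟨α, hα, rfl⟩, ?_⟩
  rintro _ ⟨β, hβ, rfl⟩
  have hsum : ∑ i, (β - α) i = 0 := by simp [Finset.sum_sub_distrib, hβ.1, hα.1]
  have hdesc : grad y K α ⬝ᵥ (β - α) ≤ 0 := by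
    refine dotProduct_nonpos_of_sum_eq_zero hsum fun p q hp hq => hkkt p ?_ q ?_
    · exact (sub_pos.1 hp).trans_le (hβ.2 p).2
    · exact (hβ.2 q).1.trans_lt (sub_neg.1 hq)
  linarith [obj_le_add_grad_dotProduct (y := y) hK α β]

lemma exists_grad_lt_of_notMem_opt {y : Fin l → ℝ} {K : Matrix (Fin l) (Fin l) ℝ} {C : ℝ}
    (hK : K.PosSemidef) {α : Fin l → ℝ} (hα : α ∈ feas y C \ opt y K C) :
    ∃ p ∈ Iup y C α, ∃ q ∈ Idown y C α, grad y K α q < grad y K α p := by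
  by_contra! h
  exact hα.2 (mem_opt_of_grad_le hK hα.1 h)

lemma ngain_pos_iff {y : Fin l → ℝ} {K : Matrix (Fin l) (Fin l) ℝ} (hK : K.PosSemidef)
    (B : Fin l × Fin l) (α : Fin l → ℝ) :
    0 < ngain y K B α ↔ dir B ⬝ᵥ grad y K α ≠ 0 := by
  have hcurv : 0 ≤ dir B ⬝ᵥ (K *ᵥ dir B) := by
    simpa using hK.dotProduct_mulVec_nonneg (dir B)
  unfold ngain
  split_ifs with hflat hstat
  · simp [hstat]
  · simp [hstat]
  · have hcurv' : 0 < 2 * (dir B ⬝ᵥ (K *ᵥ dir B)) := by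
      have := lt_of_le_of_ne hcurv (Ne.symm hflat)
      positivity
    rw [ENNReal.ofReal_pos, div_pos_iff_of_pos_right hcurv', sq_pos_iff]

lemma ngain_eq_top {y : Fin l → ℝ} {K : Matrix (Fin l) (Fin l) ℝ} {B : Fin l × Fin l}
    {α : Fin l → ℝ} (hker : K *ᵥ dir B = 0) (hB : dir B ⬝ᵥ grad y K α ≠ 0) :
    ngain y K B α = ⊤ := by
  simp [ngain, hker, hB]

theorem wss_grad_ne_zero_general
    (y : Fin l → ℝ)
    (K : Matrix (Fin l) (Fin l) ℝ) (hK : K.PosSemidef) (C : ℝ)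
    (W : (Fin l → ℝ) → Fin l × Fin l) (hW : IsSecondOrderWSS y K C W) :
    ∀ α ∈ feas y C \ opt y K C,
      dir (W α) ⬝ᵥ grad y K α ≠ 0 ∧
      (K *ᵥ dir (W α) = 0 → ngain y K (W α) α = ⊤) := by
  intro α hα
  obtain ⟨-, hi_max, hj_max⟩ := hW α hα
  obtain ⟨p, hp, q, hq, hqp⟩ := exists_grad_lt_of_notMem_opt hK hα
  have hgap : grad y K α q < grad y K α (W α).1 := hqp.trans_le (hi_max p hp)
  have hq_ne : q ≠ (W α).1 := by rintro rfl; exact hgap.false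
  have hgain : 0 < ngain y K ((W α).1, q) α :=
    (ngain_pos_iff hK _ α).2 (by rw [dir_dotProduct]; exact (sub_pos.2 hgap).ne')
  have hW_ne : dir (W α) ⬝ᵥ grad y K α ≠ 0 :=
    (ngain_pos_iff hK _ α).1 (hgain.trans_le (hj_max q hq hq_ne))
  exact ⟨hW_ne, fun hker => ngain_eq_top hker hW_ne⟩

/-- For a second-order working set selection `W` and every `α ∈ R \ R*`,
one has `v_{W(α)}ᵀ∇f(α) ≠ 0`; in particular, if `K v_{W(α)} = 0` then `g̃_W(α) = ∞`. -/
theorem wss_grad_ne_zero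
    (hl : 2 ≤ l) (y : Fin l → ℝ) (hy : ∀ i, y i = 1 ∨ y i = -1)
    (K : Matrix (Fin l) (Fin l) ℝ) (hK : K.PosSemidef) (C : ℝ) (hC : 0 < C)
    (W : (Fin l → ℝ) → Fin l × Fin l) (hW : IsSecondOrderWSS y K C W) :
    ∀ α ∈ feas y C \ opt y K C,
      dir (W α) ⬝ᵥ grad y K α ≠ 0 ∧
      (K *ᵥ dir (W α) = 0 → ngain y K (W α) α = ⊤) :=
  wss_grad_ne_zero_general y K hK C W hW

end

end SMO
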